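/- arXiv:1204.4996 — 2 statements merged into one kernel-verified Lean document; each statement's English description precedes it below -/
import Mathlib

section
/- In a D_ε-uniform metric space (X, d_ε), any two points x, y satisfy the quasihyperbolic distance bound k_ε(x,y) ≤ 4 D_ε² log(1 + d_ε(x,y)/min{d_ε(x), d_ε(y)}). -/
open Metric UniformSpace

noncomputable def lineIntegral {X : Type*} [MetricSpace X] (ρ : X → ℝ) (γ : ℝ → X) (L : ℝ) : ℝ :=
  ∫ t in (0:ℝ)..L, ρ (γ t)

def IsUnitSpeed {X : Type*} [MetricSpace X] (γ : ℝ → X) (L : ℝ) : Prop :=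
  0 ≤ L ∧ LipschitzOnWith 1 γ (Set.Icc 0 L)

noncomputable def confDist {X : Type*} [MetricSpace X] (ρ : X → ℝ) (x y : X) : ℝ :=
  sInf {r : ℝ | ∃ γ L, IsUnitSpeed γ L ∧ γ 0 = x ∧ γ L = y ∧ r = lineIntegral ρ γ L}

noncomputable def distB {X : Type*} [MetricSpace X] (z : X) : ℝ :=
  Metric.infDist ((z : Completion X)) ((Set.range ((↑) : X → Completion X))ᶜ)

noncomputable def qhDist {X : Type*} [MetricSpace X] (x y : X) : ℝ :=
  confDist (fun z => 1 / distB z) x y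

def RectConn (X : Type*) [MetricSpace X] : Prop :=
  ∀ x y : X, ∃ γ L, IsUnitSpeed γ L ∧ γ 0 = x ∧ γ L = y

/-
Let `γ` be a `D`-uniform curve from `x` to `y`, of length `L ≤ D d(x, y)`, and let
`m = min (d_ε x) (d_ε y)`. Reversing `γ` reduces everything to the first half `[0, L / 2]`, where
`d_ε (γ t) ≥ max (m - t) (t / D)` because `d_ε` is 1-Lipschitz and by the cigar condition.
Splitting at the crossing point `t₁ = D m / (D + 1)` of the two bounds, each piece integrates to a
logarithm, and Bernoulli's inequality `log (1 + p a) ≤ p log (1 + a)` (for `p ≥ 1`) bounds each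
of them by `D² log (1 + d(x, y) / m)`.
-/

open Set MeasureTheory intervalIntegral

lemma Real.log_one_add_mul_le {p a : ℝ} (hp : 1 ≤ p) (ha : 0 ≤ a) :
    Real.log (1 + p * a) ≤ p * Real.log (1 + a) := by
  rw [← Real.log_rpow (by linarith)]
  exact Real.log_le_log (by positivity) (one_add_mul_self_le_rpow_one_add (by linarith) hp)

lemma integral_le_log_div_of_le_inv_sub {f : ℝ → ℝ} {m s : ℝ} (hs : 0 ≤ s) (hsm : s < m)
    (hf : IntervalIntegrable f volume 0 s) (hle : ∀ t ∈ Icc 0 s, f t ≤ 1 / (m - t)) :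
    ∫ t in 0..s, f t ≤ Real.log (m / (m - s)) := by
  have hint : IntervalIntegrable (fun t => 1 / (m - t)) volume 0 s := by
    refine ContinuousOn.intervalIntegrable ?_
    rw [uIcc_of_le hs]
    exact continuousOn_const.div (continuousOn_const.sub continuousOn_id)
      fun t ht => (sub_pos.2 (ht.2.trans_lt hsm)).ne'
  calc ∫ t in 0..s, f t ≤ ∫ t in 0..s, 1 / (m - t) := integral_mono_on hs hf hint hle
    _ = Real.log (m / (m - s)) := by
      rw [integral_comp_sub_left (fun t => 1 / t), sub_zero,
        integral_one_div_of_pos (by linarith) (by linarith)]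

lemma integral_le_mul_log_div_of_le_div {f : ℝ → ℝ} {c s h : ℝ} (hs : 0 < s) (hsh : s ≤ h)
    (hf : IntervalIntegrable f volume s h) (hle : ∀ t ∈ Icc s h, f t ≤ c / t) :
    ∫ t in s..h, f t ≤ c * Real.log (h / s) := by
  have hint : IntervalIntegrable (fun t => c / t) volume s h := by
    refine ContinuousOn.intervalIntegrable ?_
    rw [uIcc_of_le hsh]
    exact continuousOn_const.div continuousOn_id fun t ht => (hs.trans_le ht.1).ne'
  calc ∫ t in s..h, f t ≤ ∫ t in s..h, c / t := integral_mono_on hsh hf hint hle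
    _ = c * Real.log (h / s) := by
      simp_rw [div_eq_mul_one_div c]
      rw [intervalIntegral.integral_const_mul, integral_one_div_of_pos hs (hs.trans_le hsh)]

lemma integral_eq_integral_half_add_integral_half_comp_sub {f : ℝ → ℝ} {L : ℝ}
    (hL : 0 ≤ L) (hf : IntervalIntegrable f volume 0 L) :
    ∫ t in 0..L, f t = (∫ t in 0..L / 2, f t) + ∫ t in 0..L / 2, f (L - t) := by
  have hsub : ∀ {a b}, a ∈ Icc 0 L → b ∈ Icc 0 L → uIcc a b ⊆ uIcc 0 L := fun ha hb =>
    uIcc_subset_uIcc (by rwa [uIcc_of_le hL]) (by rwa [uIcc_of_le hL])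
  rw [integral_comp_sub_left f L, sub_zero, show L - L / 2 = L / 2 by ring,
    integral_add_adjacent_intervals (hf.mono_set (hsub ?_ ?_)) (hf.mono_set (hsub ?_ ?_))] <;>
  constructor <;> linarith

lemma integral_one_div_le_log_add_mul_log {φ : ℝ → ℝ} {D m s h : ℝ} (hs : 0 < s)
    (hsh : s ≤ h) (hsm : s < m) (hφ : ContinuousOn φ (Icc 0 h))
    (hφpos : ∀ t ∈ Icc 0 h, 0 < φ t)
    (hφm : ∀ t ∈ Icc 0 s, m - t ≤ φ t) (hφD : ∀ t ∈ Icc s h, t ≤ D * φ t) :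
    ∫ t in 0..h, 1 / φ t ≤ Real.log (m / (m - s)) + D * Real.log (h / s) := by
  have hint : IntervalIntegrable (fun t => 1 / φ t) volume 0 h := by
    refine ContinuousOn.intervalIntegrable ?_
    rw [uIcc_of_le (hs.le.trans hsh)]
    exact continuousOn_const.div hφ fun t ht => (hφpos t ht).ne'
  have hs_mem : s ∈ uIcc 0 h := by rw [uIcc_of_le (hs.le.trans hsh)]; exact ⟨hs.le, hsh⟩
  have hint₁ := hint.mono_set (uIcc_subset_uIcc_left hs_mem)
  have hint₂ := hint.mono_set (uIcc_subset_uIcc_right hs_mem)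
  rw [← integral_add_adjacent_intervals hint₁ hint₂]
  refine add_le_add (integral_le_log_div_of_le_inv_sub hs.le hsm hint₁ fun t ht => ?_)
    (integral_le_mul_log_div_of_le_div hs hsh hint₂ fun t ht => ?_)
  · exact one_div_le_one_div_of_le (by linarith [ht.2]) (hφm t ht)
  · have htpos := hs.trans_le ht.1
    rw [div_le_div_iff₀ (hφpos t ⟨htpos.le, ht.2⟩) htpos]
    linarith [hφD t ht]

lemma log_div_sub_min_le {D m a h : ℝ} (hD : 1 ≤ D) (hm : 0 < m) (ha : 0 ≤ a)
    (hha : 2 * h ≤ D * a * m) :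
    Real.log (m / (m - min h (D * m / (D + 1)))) ≤ D ^ 2 * Real.log (1 + a) := by
  set s := min h (D * m / (D + 1))
  have hsh : s ≤ h := min_le_left _ _
  have hms : m ≤ (D + 1) * (m - s) := by
    have := (le_div_iff₀' (by linarith : (0 : ℝ) < D + 1)).1 (min_le_right h (D * m / (D + 1)))
    linarith
  have hsa : (D + 1) * s ≤ D ^ 2 * a * m := by
    nlinarith [mul_nonneg (mul_nonneg ha hm.le) (mul_nonneg (by linarith) (by linarith) :
      0 ≤ D * (D - 1))]
  have hs_le : (D + 1) * s ≤ (D + 1) * (D ^ 2 * a * (m - s)) := by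
    nlinarith [mul_nonneg (by positivity : 0 ≤ D ^ 2 * a) (sub_nonneg.2 hms)]
  have hsm : 0 < m - s := by nlinarith
  refine (Real.log_le_log (by positivity) ?_).trans (Real.log_one_add_mul_le (by nlinarith) ha)
  rw [div_le_iff₀ hsm]
  nlinarith [le_of_mul_le_mul_left hs_le (by linarith)]

lemma log_div_min_le {D m a h : ℝ} (hD : 1 ≤ D) (hm : 0 < m) (ha : 0 ≤ a) (hh : 0 < h)
    (hha : 2 * h ≤ D * a * m) :
    Real.log (h / min h (D * m / (D + 1))) ≤ D * Real.log (1 + a) := by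
  refine (Real.log_le_log (div_pos hh (lt_min hh (by positivity))) ?_).trans
    (Real.log_one_add_mul_le hD ha)
  rw [div_le_iff₀ (lt_min hh (by positivity))]
  rcases min_choice h (D * m / (D + 1)) with hs | hs <;> rw [hs]
  · nlinarith
  · rw [mul_div_assoc', le_div_iff₀ (by linarith)]
    nlinarith [mul_nonneg (mul_nonneg ha hm.le) (mul_nonneg (by linarith) (by linarith) :
      0 ≤ D * (D - 1))]

lemma integral_one_div_le_of_le_sub_of_le_mul {φ : ℝ → ℝ} {D m d h : ℝ} (hD : 1 ≤ D)
    (hm : 0 < m) (hh : 0 ≤ h) (hhd : 2 * h ≤ D * d) (hφ : ContinuousOn φ (Icc 0 h))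
    (hφm : ∀ t ∈ Icc 0 h, m - t ≤ φ t) (hφD : ∀ t ∈ Icc 0 h, t ≤ D * φ t) :
    ∫ t in 0..h, 1 / φ t ≤ 2 * D ^ 2 * Real.log (1 + d / m) := by
  set a := d / m with ha_def
  have ha : 0 ≤ a :=
    div_nonneg (nonneg_of_mul_nonneg_right (by linarith : 0 ≤ D * d) (by linarith)) hm.le
  have hha : 2 * h ≤ D * a * m := by rwa [ha_def, mul_assoc, div_mul_cancel₀ d hm.ne']
  rcases hh.eq_or_lt with rfl | hh
  · simp only [integral_same]
    have := Real.log_nonneg (le_add_of_nonneg_right ha)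
    positivity
  have hφpos : ∀ t ∈ Icc 0 h, 0 < φ t := fun t ht => by
    rcases lt_or_ge t m with htm | htm
    · linarith [hφm t ht]
    · exact pos_of_mul_pos_right ((hm.trans_le htm).trans_le (hφD t ht)) (by linarith)
  -- `m - t = t / D` at `t = D m / (D + 1)`: use the first bound before it, the second after.
  set s := min h (D * m / (D + 1))
  have hs : 0 < s := lt_min hh (by positivity)
  have hsh : s ≤ h := min_le_left _ _
  have hsm : s < m :=
    (min_le_right _ _).trans_lt ((div_lt_iff₀ (by linarith)).2 (by nlinarith))
  calc ∫ t in 0..h, 1 / φ t ≤ Real.log (m / (m - s)) + D * Real.log (h / s) :=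
        integral_one_div_le_log_add_mul_log hs hsh hsm hφ hφpos
          (fun t ht => hφm t ⟨ht.1, ht.2.trans hsh⟩)
          (fun t ht => hφD t ⟨hs.le.trans ht.1, ht.2⟩)
    _ ≤ D ^ 2 * Real.log (1 + a) + D * (D * Real.log (1 + a)) :=
        add_le_add (log_div_sub_min_le hD hm ha hha)
          (mul_le_mul_of_nonneg_left (log_div_min_le hD hm ha hh hha) (by linarith))
    _ = 2 * D ^ 2 * Real.log (1 + a) := by ring

section Curves

variable {X : Type*} [MetricSpace X]

lemma confDist_le_lineIntegral {ρ : X → ℝ} (hρ : ∀ z, 0 ≤ ρ z) {γ : ℝ → X} {L : ℝ}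
    (hγ : IsUnitSpeed γ L) : confDist ρ (γ 0) (γ L) ≤ lineIntegral ρ γ L :=
  csInf_le ⟨0, by
    rintro r ⟨γ', L', hγ', -, -, rfl⟩
    exact integral_nonneg hγ'.1 fun t _ => hρ _⟩ ⟨γ, L, hγ, rfl, rfl, rfl⟩

lemma IsUnitSpeed.intervalIntegrable_comp {f : X → ℝ} (hf : Continuous f) {γ : ℝ → X}
    {L : ℝ} (hγ : IsUnitSpeed γ L) : IntervalIntegrable (fun t => f (γ t)) volume 0 L := by
  refine ContinuousOn.intervalIntegrable ?_
  rw [uIcc_of_le hγ.1]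
  exact hf.comp_continuousOn hγ.2.continuousOn

lemma IsUnitSpeed.reverse {γ : ℝ → X} {L : ℝ} (hγ : IsUnitSpeed γ L) :
    IsUnitSpeed (fun t => γ (L - t)) L := by
  refine ⟨hγ.1, fun u hu v hv => ?_⟩
  have hmem : ∀ {t}, t ∈ Icc 0 L → L - t ∈ Icc 0 L := fun ht =>
    ⟨by linarith [ht.2], by linarith [ht.1]⟩
  simpa only [edist_sub_left] using hγ.2 (hmem hu) (hmem hv)

def IsCigarCurve (D : ℝ) (γ : ℝ → X) (L : ℝ) : Prop :=
  IsUnitSpeed γ L ∧ ∀ t ∈ Icc 0 L, min t (L - t) ≤ D * distB (γ t)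

lemma IsCigarCurve.reverse {D : ℝ} {γ : ℝ → X} {L : ℝ} (hγ : IsCigarCurve D γ L) :
    IsCigarCurve D (fun t => γ (L - t)) L := by
  refine ⟨hγ.1.reverse, fun t ht => ?_⟩
  have := hγ.2 (L - t) ⟨by linarith [ht.2], by linarith [ht.1]⟩
  rwa [sub_sub_cancel, min_comm] at this

lemma distB_le_distB_add_dist (z w : X) : distB z ≤ distB w + dist z w := by
  unfold distB
  simpa only [Completion.dist_eq] using infDist_le_infDist_add_dist (x := (z : Completion X))
    (y := w) (s := (range ((↑) : X → Completion X))ᶜ)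

lemma lipschitzWith_one_distB : LipschitzWith 1 (distB : X → ℝ) :=
  LipschitzWith.of_le_add distB_le_distB_add_dist

lemma IsCigarCurve.integral_half_le {D m d : ℝ} {γ : ℝ → X} {L : ℝ}
    (hγ : IsCigarCurve D γ L) (hD : 1 ≤ D) (hm : 0 < m) (hmγ : m ≤ distB (γ 0))
    (hL : L ≤ D * d) :
    ∫ t in 0..L / 2, 1 / distB (γ t) ≤ 2 * D ^ 2 * Real.log (1 + d / m) := by
  have hL0 := hγ.1.1
  have hhalf : ∀ {t}, t ∈ Icc 0 (L / 2) → t ∈ Icc 0 L := fun ht =>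
    ⟨ht.1, by linarith [ht.2]⟩
  refine integral_one_div_le_of_le_sub_of_le_mul hD hm (by linarith) (by linarith)
    ((lipschitzWith_one_distB.continuous.comp_continuousOn hγ.1.2.continuousOn).mono
      (Icc_subset_Icc_right (by linarith))) (fun t ht => ?_) (fun t ht => ?_)
  · have hdist : dist (γ 0) (γ t) ≤ t := by
      simpa [Real.dist_eq, abs_of_nonneg ht.1] using
        hγ.1.2.dist_le_mul 0 ⟨le_rfl, hL0⟩ t (hhalf ht)
    linarith [distB_le_distB_add_dist (γ 0) (γ t)]
  · simpa [min_eq_left (by linarith [ht.2] : t ≤ L - t)] using hγ.2 t (hhalf ht)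

end Curves

lemma UniformSpace.Completion.isOpen_range_coe (X : Type*) [MetricSpace X]
    [LocallyCompactSpace X] : IsOpen (range ((↑) : X → Completion X)) := by
  rw [isOpen_iff_mem_nhds]
  rintro _ ⟨x, rfl⟩
  obtain ⟨r, hr, hcomp⟩ := exists_isCompact_closedBall x
  have himg : IsCompact (((↑) : X → Completion X) '' closedBall x r) :=
    hcomp.image (Completion.continuous_coe X)
  have hsub : Metric.ball (x : Completion X) r ∩ range ((↑) : X → Completion X) ⊆
      ((↑) : X → Completion X) '' closedBall x r := by
    rintro _ ⟨hq, z, rfl⟩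
    exact ⟨z, mem_closedBall.2 (by rw [← Completion.dist_eq]; exact (mem_ball.1 hq).le), rfl⟩
  refine Filter.mem_of_superset (Metric.ball_mem_nhds _ hr) fun p hp => ?_
  obtain ⟨z, -, rfl⟩ := himg.isClosed.closure_subset_iff.2 hsub
    (Completion.denseRange_coe.open_subset_closure_inter Metric.isOpen_ball hp)
  exact ⟨z, rfl⟩

lemma distB_pos {X : Type*} [MetricSpace X] [LocallyCompactSpace X]
    (hnc : (range ((↑) : X → Completion X))ᶜ.Nonempty) (z : X) : 0 < distB z :=
  ((Completion.isOpen_range_coe X).isClosed_compl.notMem_iff_infDist_pos hnc).1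
    fun h => h ⟨z, rfl⟩

/-- in a D_ε-uniform space, the quasihyperbolic distance satisfies
k_ε(x,y) ≤ 4 D_ε² log(1 + d_ε(x,y)/min{d_ε(x), d_ε(y)}). -/
theorem stmt_8 {X : Type*} [MetricSpace X] [LocallyCompactSpace X]
    (hnc : (Set.range ((↑) : X → Completion X))ᶜ.Nonempty)
    (D : ℝ) (hD : 1 ≤ D)
    -- D-uniformity: every pair of points is joined by an arclength-parametrized curve
    -- which is D-quasiconvex and satisfies the cigar condition
    (hunif : ∀ x y : X, ∃ γ L, IsUnitSpeed γ L ∧ γ 0 = x ∧ γ L = y ∧ L ≤ D * dist x y ∧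
      ∀ t ∈ Set.Icc (0:ℝ) L, min t (L - t) ≤ D * distB (γ t))
    (x y : X) :
    qhDist x y ≤ 4 * D ^ 2 * Real.log (1 + dist x y / min (distB x) (distB y)) := by
  obtain ⟨γ, L, hγ, rfl, rfl, hL, hcigar⟩ := hunif x y
  have hcurve : IsCigarCurve D γ L := ⟨hγ, hcigar⟩
  have hm : 0 < min (distB (γ 0)) (distB (γ L)) := lt_min (distB_pos hnc _) (distB_pos hnc _)
  have hint : IntervalIntegrable (fun t => 1 / distB (γ t)) volume 0 L :=
    hγ.intervalIntegrable_comp <|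
      continuous_const.div lipschitzWith_one_distB.continuous fun z => (distB_pos hnc z).ne'
  calc qhDist (γ 0) (γ L) ≤ ∫ t in 0..L, 1 / distB (γ t) :=
        confDist_le_lineIntegral (fun z => one_div_nonneg.2 infDist_nonneg) hγ
    _ = (∫ t in 0..L / 2, 1 / distB (γ t)) + ∫ t in 0..L / 2, 1 / distB (γ (L - t)) :=
        integral_eq_integral_half_add_integral_half_comp_sub hγ.1 hint
    _ ≤ _ + _ := add_le_add (hcurve.integral_half_le hD hm (min_le_left _ _) hL)
        (hcurve.reverse.integral_half_le hD hm (by simp) hL)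
    _ = _ := by ring
end

section
/- Frostman-type mass distribution: for any compact curve γ in a metric space there exists a Radon measure ν supported on γ such that ν(E) ≤ diam(E) for every E ⊂ γ and ν(γ) ≥ diam(γ)/60. -/
/-!
Take the base point `f 0` and a parameter `u₁ ∈ [0, 1]` maximising `dist (f u) (f 0)`, so that
`D := dist (f u₁) (f 0) ≥ diam γ / 2`. Along `f` on `[0, u₁]` the 1-Lipschitz function
`g := dist · (f 0)` takes every value `t ∈ [0, D]`; the first parameter at which it does so is
monotone, hence measurable, in `t`, so it yields a measurable section `s : [0, D] → γ` of `g`.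
The push-forward of Lebesgue measure on `[0, D]` by `s` has mass `D`, and
`ν E ≤ |g (closure E)| ≤ diam E`.
-/

open MeasureTheory Set Metric

/-- Clamping `t` at `h b` keeps `b` in the set, which makes `firstHitting h a b` monotone on all
of `ℝ`. -/
noncomputable def firstHitting (h : ℝ → ℝ) (a b t : ℝ) : ℝ :=
  sInf {u ∈ Icc a b | min t (h b) ≤ h u}

section firstHitting

variable {h : ℝ → ℝ} {a b : ℝ}

theorem firstHitting_mem (hab : a ≤ b) (hh : ContinuousOn h (Icc a b)) (t : ℝ) :
    firstHitting h a b t ∈ {u ∈ Icc a b | min t (h b) ≤ h u} := by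
  have hclosed : IsClosed {u ∈ Icc a b | min t (h b) ≤ h u} :=
    hh.preimage_isClosed_of_isClosed isClosed_Icc isClosed_Ici
  exact hclosed.csInf_mem ⟨b, right_mem_Icc.2 hab, min_le_right _ _⟩ ⟨a, fun _ hu => hu.1.1⟩

theorem monotone_firstHitting (hab : a ≤ b) : Monotone (firstHitting h a b) := fun _ _ hst =>
  csInf_le_csInf ⟨a, fun _ hu => hu.1.1⟩ ⟨b, right_mem_Icc.2 hab, min_le_right _ _⟩
    fun _ hu => ⟨hu.1, (min_le_min_right _ hst).trans hu.2⟩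

theorem apply_firstHitting (hab : a ≤ b) (hh : ContinuousOn h (Icc a b)) {t : ℝ}
    (ht : t ∈ Icc (h a) (h b)) : h (firstHitting h a b t) = t := by
  obtain ⟨⟨haτ, hτb⟩, hle⟩ := firstHitting_mem hab hh t
  rw [min_eq_left ht.2] at hle
  obtain ⟨u, hu, hut⟩ : t ∈ h '' Icc a (firstHitting h a b t) :=
    intermediate_value_Icc haτ (hh.mono (Icc_subset_Icc_right hτb)) ⟨ht.1, hle⟩
  have : firstHitting h a b t ≤ u :=
    csInf_le ⟨a, fun _ hv => hv.1.1⟩ ⟨⟨hu.1, hu.2.trans hτb⟩, hut ▸ min_le_left _ _⟩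
  rwa [← le_antisymm hu.2 this]

end firstHitting

section pushforward

variable {α X : Type*} [MeasurableSpace α] [MeasurableSpace X] {μ : Measure α} {s : α → X}
  {T : Set α} {K : Set X}

theorem map_restrict_apply_compl_eq_zero (hs : Measurable s) (hK : MeasurableSet K)
    (hsK : MapsTo s T K) : (μ.restrict T).map s Kᶜ = 0 := by
  rw [Measure.map_apply hs hK.compl, Measure.restrict_apply (hs hK.compl),
    preimage_compl, (disjoint_compl_left_iff_subset.2 hsK.subset_preimage).inter_eq, measure_empty]

theorem map_restrict_apply_of_mapsTo (hs : Measurable s) (hK : MeasurableSet K)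
    (hsK : MapsTo s T K) : (μ.restrict T).map s K = μ T := by
  rw [Measure.map_apply hs hK, Measure.restrict_apply_superset hsK.subset_preimage]

end pushforward

theorem map_restrict_volume_le_ediam {X : Type*} [PseudoEMetricSpace X] [MeasurableSpace X]
    [OpensMeasurableSpace X] {g : X → ℝ} {s : ℝ → X} {T : Set ℝ} (hg : LipschitzWith 1 g)
    (hs : Measurable s) (hgs : LeftInvOn g s T) (E : Set X) :
    (volume.restrict T).map s E ≤ ediam E := by
  have hpre : s ⁻¹' closure E ∩ T ⊆ g '' closure E := fun t ht => ⟨s t, ht.1, hgs ht.2⟩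
  calc (volume.restrict T).map s E ≤ (volume.restrict T).map s (closure E) :=
        measure_mono subset_closure
    _ = volume (s ⁻¹' closure E ∩ T) := by
        rw [Measure.map_apply hs isClosed_closure.measurableSet,
          Measure.restrict_apply (hs isClosed_closure.measurableSet)]
    _ ≤ volume (g '' closure E) := measure_mono hpre
    _ ≤ ediam (g '' closure E) := Real.volume_le_diam _
    _ ≤ ediam (closure E) := by simpa using hg.ediam_image_le (closure E)
    _ = ediam E := ediam_closure E

theorem stmt_10_general {X : Type*} [MetricSpace X] [MeasurableSpace X] [BorelSpace X]
    (γ : Set X) (f : ℝ → X) (hf : Continuous f) (hγ : γ = f '' Set.Icc 0 1) :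
    ∃ ν : Measure X, ν γᶜ = 0 ∧
      (∀ E : Set X, E ⊆ γ → ν E ≤ ENNReal.ofReal (Metric.diam E)) ∧
      ENNReal.ofReal (Metric.diam γ / 60) ≤ ν γ := by
  have hγc : IsCompact γ := hγ ▸ isCompact_Icc.image hf
  set h : ℝ → ℝ := fun u => dist (f u) (f 0)
  have hh : Continuous h := by fun_prop
  obtain ⟨u₁, hu₁, hmax⟩ :=
    isCompact_Icc.exists_isMaxOn (nonempty_Icc.2 zero_le_one) hh.continuousOn
  have hdiam : diam γ ≤ 2 * h u₁ := by
    refine diam_le_of_forall_dist_le (by positivity) ?_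
    rw [hγ]
    rintro _ ⟨u, hu, rfl⟩ _ ⟨v, hv, rfl⟩
    have hu_le : h u ≤ h u₁ := hmax hu
    have hv_le : h v ≤ h u₁ := hmax hv
    linarith [dist_triangle_right (f u) (f v) (f 0)]
  set s : ℝ → X := f ∘ firstHitting h 0 u₁
  have hs : Measurable s := hf.measurable.comp (monotone_firstHitting hu₁.1).measurable
  have hsγ : MapsTo s (Icc 0 (h u₁)) γ := fun t _ => hγ ▸ mem_image_of_mem f
    (Icc_subset_Icc_right hu₁.2 (firstHitting_mem hu₁.1 hh.continuousOn t).1)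
  have hgs : LeftInvOn (dist · (f 0)) s (Icc 0 (h u₁)) := fun t ht =>
    apply_firstHitting hu₁.1 hh.continuousOn (by simpa [h] using ht)
  refine ⟨(volume.restrict (Icc 0 (h u₁))).map s,
    map_restrict_apply_compl_eq_zero hs hγc.isClosed.measurableSet hsγ, fun E hE => ?_, ?_⟩
  · have hE_ne_top := isBounded_iff_ediam_ne_top.1 (hγc.isBounded.subset hE)
    rw [Metric.diam, ENNReal.ofReal_toReal hE_ne_top]
    exact map_restrict_volume_le_ediam (LipschitzWith.dist_left (f 0)) hs hgs E
  · rw [map_restrict_apply_of_mapsTo hs hγc.isClosed.measurableSet hsγ, Real.volume_Icc, sub_zero]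
    exact ENNReal.ofReal_le_ofReal (by linarith [diam_nonneg (s := γ)])

/-- Frostman-type mass distribution: for every compact curve γ (the image
of a continuous curve) in a metric space there is a Radon measure ν supported on γ with
ν(E) ≤ diam(E) for every E ⊆ γ and ν(γ) ≥ diam(γ)/60. -/
theorem stmt_10 {X : Type*} [MetricSpace X] [MeasurableSpace X] [BorelSpace X]
    (γ : Set X) (f : ℝ → X) (hf : Continuous f) (hγ : γ = f '' Set.Icc 0 1)
    (hnontriv : ∃ a ∈ γ, ∃ b ∈ γ, a ≠ b) :
    ∃ ν : Measure X, ν γᶜ = 0 ∧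
      (∀ E : Set X, E ⊆ γ → ν E ≤ ENNReal.ofReal (Metric.diam E)) ∧
      ENNReal.ofReal (Metric.diam γ / 60) ≤ ν γ :=
  stmt_10_general γ f hf hγ
end
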